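/- If B covers A in ASM order on 𝒜_n, then β(B) = β(A) + 1. -/

import Mathlib

/-- An alternating sign matrix: entries in {-1,0,1}, partial row/column sums in {0,1},
full row/column sums equal to 1. -/
def IsASM {n : ℕ} (A : Matrix (Fin n) (Fin n) ℤ) : Prop :=
  (∀ i j, A i j = -1 ∨ A i j = 0 ∨ A i j = 1) ∧
  (∀ i j, (∑ k ∈ Finset.Iic j, A i k) = 0 ∨ (∑ k ∈ Finset.Iic j, A i k) = 1) ∧
  (∀ i j, (∑ k ∈ Finset.Iic i, A k j) = 0 ∨ (∑ k ∈ Finset.Iic i, A k j) = 1) ∧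
  (∀ i, (∑ k, A i k) = 1) ∧
  (∀ j, (∑ k, A k j) = 1)

/-- Corner sum matrix. -/
def cornerSum {n : ℕ} (A : Matrix (Fin n) (Fin n) ℤ) (i j : Fin n) : ℤ :=
  ∑ p ∈ Finset.Iic i, ∑ q ∈ Finset.Iic j, A p q

/-- ASM order: `A ≤ B` iff corner sums of `A` dominate those of `B`. -/
def asmLE {n : ℕ} (A B : Matrix (Fin n) (Fin n) ℤ) : Prop :=
  ∀ i j, cornerSum B i j ≤ cornerSum A i j

def asmLT {n : ℕ} (A B : Matrix (Fin n) (Fin n) ℤ) : Prop :=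
  asmLE A B ∧ ¬ asmLE B A

/-- `B` covers `A` in the poset of ASMs of size `n`. -/
def asmCovers {n : ℕ} (A B : Matrix (Fin n) (Fin n) ℤ) : Prop :=
  asmLT A B ∧ ∀ C : Matrix (Fin n) (Fin n) ℤ, IsASM C → asmLT A C → ¬ asmLT C B

/-- `A` is join-irreducible: it covers exactly one element of the ASM poset. -/
def JoinIrred {n : ℕ} (A : Matrix (Fin n) (Fin n) ℤ) : Prop :=
  IsASM A ∧ ∃! C : Matrix (Fin n) (Fin n) ℤ, IsASM C ∧ asmCovers C A

/-- `β B` = number of join-irreducible ASMs weakly below `B`. -/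
noncomputable def asmBeta {n : ℕ} (B : Matrix (Fin n) (Fin n) ℤ) : ℕ :=
  Set.ncard {A : Matrix (Fin n) (Fin n) ℤ | JoinIrred A ∧ asmLE A B}

/-!
Encode an `n × n` matrix by its corner sums `g i j` (first `i` rows, first `j` columns). It is an
ASM exactly when `g` vanishes on the top and left borders, grows by `0` or `1` at each step down
or right, and equals `i` on the last column and `j` on the last row. These conditions survive
pointwise `min` and `max`, so ASMs ordered by reverse corner sums form a finite distributive
lattice, in which "covers exactly one element" means sup-irreducible. In a finite distributive
lattice a cover `a ⋖ b` gains exactly one sup-irreducible element below it.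
-/

section FiniteLattice

variable {α : Type*}

theorem le_of_forall_supIrred_le [Lattice α] [Finite α] {a b : α}
    (h : ∀ j, SupIrred j → j ≤ a → j ≤ b) : a ≤ b := by
  cases nonempty_fintype α
  have : Nonempty α := ⟨a⟩
  let := Fintype.toOrderBot α
  obtain ⟨s, rfl, hs⟩ := exists_supIrred_decomposition a
  exact Finset.sup_le fun j hj => h j (hs hj) (Finset.le_sup (f := id) hj)

theorem supIrred_iff_existsUnique_covBy [Lattice α] [Finite α] {a : α} :
    SupIrred a ↔ ∃! c, c ⋖ a := by
  constructor
  · intro ha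
    obtain ⟨b, hb⟩ := not_isMin_iff.1 ha.1
    obtain ⟨c, -, hc⟩ := exists_le_covBy_of_lt hb
    refine ⟨c, hc, fun c' hc' => ?_⟩
    by_contra hne
    rcases ha.2 (hc'.wcovBy.sup_eq hc.wcovBy hne) with h | h
    exacts [hc'.ne h, hc.ne h]
  · rintro ⟨c, hc, huniq⟩
    refine ⟨fun hmin => hc.lt.not_isMin hmin, fun b b' hbb' => ?_⟩
    by_contra! hne
    have le_c : ∀ x, x ≤ a → x ≠ a → x ≤ c := fun x hxa hx => by
      obtain ⟨m, hxm, hm⟩ := exists_le_covBy_of_lt (hxa.lt_of_ne hx)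
      exact huniq m hm ▸ hxm
    exact hc.lt.not_ge (hbb' ▸ sup_le (le_c b (hbb' ▸ le_sup_left) hne.1)
      (le_c b' (hbb' ▸ le_sup_right) hne.2))

/-- Two sup-irreducibles `j`, `j'` below `b` but not below `a` satisfy `j ≤ a ⊔ j' = b`, hence
`j ≤ j'` since sup-irreducibles are sup-prime in a distributive lattice. -/
theorem ncard_supIrred_le_of_covBy [DistribLattice α] [Finite α] {a b : α} (h : a ⋖ b) :
    {j | SupIrred j ∧ j ≤ b}.ncard = {j | SupIrred j ∧ j ≤ a}.ncard + 1 := by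
  obtain ⟨j₀, hj₀, hj₀b, hj₀a⟩ : ∃ j, SupIrred j ∧ j ≤ b ∧ ¬ j ≤ a := by
    by_contra! hnone
    exact h.lt.not_ge (le_of_forall_supIrred_le hnone)
  have sup_eq : ∀ j, j ≤ b → ¬ j ≤ a → a ⊔ j = b := fun j hjb hja =>
    (h.eq_or_eq le_sup_left (sup_le h.le hjb)).resolve_left fun e => hja (e ▸ le_sup_right)
  have le_of_new : ∀ j j', SupIrred j → j ≤ b → ¬ j ≤ a → j' ≤ b → ¬ j' ≤ a → j ≤ j' :=
    fun j j' hj hjb hja hj'b hj'a =>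
      (hj.supPrime.le_sup.1 (sup_eq j' hj'b hj'a ▸ hjb)).resolve_left hja
  have hset : {j | SupIrred j ∧ j ≤ b} = insert j₀ {j | SupIrred j ∧ j ≤ a} := by
    ext j
    simp only [Set.mem_insert_iff]
    constructor
    · rintro ⟨hj, hjb⟩
      by_cases hja : j ≤ a
      · exact .inr ⟨hj, hja⟩
      · exact .inl (le_antisymm (le_of_new j j₀ hj hjb hja hj₀b hj₀a)
          (le_of_new j₀ j hj₀ hj₀b hj₀a hjb hja))
    · rintro (rfl | ⟨hj, hja⟩)
      exacts [⟨hj₀, hj₀b⟩, ⟨hj, hja.trans h.le⟩]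
  rw [hset, Set.ncard_insert_of_notMem (fun hmem => hj₀a hmem.2) (Set.toFinite _)]

end FiniteLattice

open Finset

theorem Fin.sum_Iic_eq_sum_range {M : Type*} [AddCommMonoid M] {n : ℕ} (f : ℕ → M)
    (i : Fin n) : ∑ p ∈ Iic i, f p = ∑ p ∈ range (i + 1), f p := by
  rw [Nat.range_succ_eq_Iic, ← Fin.map_valEmbedding_Iic, sum_map]
  rfl

section CornerSumFn

variable {n : ℕ}

def zeroExtend (A : Matrix (Fin n) (Fin n) ℤ) (p q : ℕ) : ℤ :=
  if h : p < n ∧ q < n then A ⟨p, h.1⟩ ⟨q, h.2⟩ else 0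

@[simp]
theorem zeroExtend_val (A : Matrix (Fin n) (Fin n) ℤ) (p q : Fin n) :
    zeroExtend A p q = A p q := by
  simp [zeroExtend]

theorem sum_range_zeroExtend_row (A : Matrix (Fin n) (Fin n) ℤ) (i j : Fin n) :
    ∑ q ∈ range (j + 1), zeroExtend A i q = ∑ k ∈ Iic j, A i k := by
  simp [← Fin.sum_Iic_eq_sum_range (zeroExtend A i)]

theorem sum_range_zeroExtend_col (A : Matrix (Fin n) (Fin n) ℤ) (i j : Fin n) :
    ∑ p ∈ range (i + 1), zeroExtend A p j = ∑ k ∈ Iic i, A k j := by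
  simp [← Fin.sum_Iic_eq_sum_range (zeroExtend A · j)]

theorem sum_range_zeroExtend_row_full (A : Matrix (Fin n) (Fin n) ℤ) (i : Fin n) :
    ∑ q ∈ range n, zeroExtend A i q = ∑ k, A i k := by
  simp [← Fin.sum_univ_eq_sum_range (zeroExtend A i)]

theorem sum_range_zeroExtend_col_full (A : Matrix (Fin n) (Fin n) ℤ) (j : Fin n) :
    ∑ p ∈ range n, zeroExtend A p j = ∑ k, A k j := by
  simp [← Fin.sum_univ_eq_sum_range (zeroExtend A · j)]

/-- `cornerSumNat A i j` sums the entries in the first `i` rows and the first `j` columns,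
so that `cornerSum A i j = cornerSumNat A (i + 1) (j + 1)`. -/
def cornerSumNat (A : Matrix (Fin n) (Fin n) ℤ) (i j : ℕ) : ℤ :=
  ∑ p ∈ range i, ∑ q ∈ range j, zeroExtend A p q

@[simp]
theorem cornerSumNat_zero_left (A : Matrix (Fin n) (Fin n) ℤ) (j : ℕ) :
    cornerSumNat A 0 j = 0 := by
  simp [cornerSumNat]

@[simp]
theorem cornerSumNat_zero_right (A : Matrix (Fin n) (Fin n) ℤ) (i : ℕ) :
    cornerSumNat A i 0 = 0 := by
  simp [cornerSumNat]

theorem cornerSumNat_succ_left (A : Matrix (Fin n) (Fin n) ℤ) (i j : ℕ) :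
    cornerSumNat A (i + 1) j = cornerSumNat A i j + ∑ q ∈ range j, zeroExtend A i q := by
  simp [cornerSumNat, sum_range_succ]

theorem cornerSumNat_succ_right (A : Matrix (Fin n) (Fin n) ℤ) (i j : ℕ) :
    cornerSumNat A i (j + 1) = cornerSumNat A i j + ∑ p ∈ range i, zeroExtend A p j := by
  simp [cornerSumNat, sum_range_succ, sum_add_distrib]

theorem cornerSum_eq_cornerSumNat (A : Matrix (Fin n) (Fin n) ℤ) (i j : Fin n) :
    cornerSum A i j = cornerSumNat A (i + 1) (j + 1) := by
  simp only [cornerSum, cornerSumNat, sum_range_zeroExtend_row,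
    ← Fin.sum_Iic_eq_sum_range (fun p => ∑ q ∈ range (j + 1), zeroExtend A p q)]

/-- Only the values of `g` at `i, j ≤ n` matter; they play the role of `cornerSumNat A i j`. -/
structure IsCornerSumFn (n : ℕ) (g : ℕ → ℕ → ℤ) : Prop where
  zero_left : ∀ j, g 0 j = 0
  zero_right : ∀ i, g i 0 = 0
  row_step : ∀ i j, i < n → j ≤ n → g i j ≤ g (i + 1) j ∧ g (i + 1) j ≤ g i j + 1
  col_step : ∀ i j, i ≤ n → j < n → g i j ≤ g i (j + 1) ∧ g i (j + 1) ≤ g i j + 1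
  last_col : ∀ i ≤ n, g i n = i
  last_row : ∀ j ≤ n, g n j = j

theorem isCornerSumFn_cornerSumNat {A : Matrix (Fin n) (Fin n) ℤ} (hA : IsASM A) :
    IsCornerSumFn n (cornerSumNat A) := by
  obtain ⟨-, hrow, hcol, hrow_full, hcol_full⟩ := hA
  refine ⟨cornerSumNat_zero_left A, cornerSumNat_zero_right A, ?_, ?_, ?_, ?_⟩
  · intro i j hi hj
    rw [cornerSumNat_succ_left]
    obtain _ | j := j
    · simp
    · rw [sum_range_zeroExtend_row A ⟨i, hi⟩ ⟨j, hj⟩]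
      rcases hrow ⟨i, hi⟩ ⟨j, hj⟩ with h | h <;> rw [h] <;> omega
  · intro i j hi hj
    rw [cornerSumNat_succ_right]
    obtain _ | i := i
    · simp
    · rw [sum_range_zeroExtend_col A ⟨i, hi⟩ ⟨j, hj⟩]
      rcases hcol ⟨i, hi⟩ ⟨j, hj⟩ with h | h <;> rw [h] <;> omega
  · intro i hi
    induction i with
    | zero => simp
    | succ i ih =>
      rw [cornerSumNat_succ_left, ih (by omega), sum_range_zeroExtend_row_full A ⟨i, hi⟩,
        hrow_full]
      push_cast; rfl
  · intro j hj
    induction j with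
    | zero => simp
    | succ j ih =>
      rw [cornerSumNat_succ_right, ih (by omega), sum_range_zeroExtend_col_full A ⟨j, hj⟩,
        hcol_full]
      push_cast; rfl

def ofCornerSumFn (n : ℕ) (g : ℕ → ℕ → ℤ) : Matrix (Fin n) (Fin n) ℤ :=
  Matrix.of fun p q => g (p + 1) (q + 1) - g p (q + 1) - g (p + 1) q + g p q

theorem ofCornerSumFn_cornerSumNat (A : Matrix (Fin n) (Fin n) ℤ) :
    ofCornerSumFn n (cornerSumNat A) = A := by
  ext p q
  simp only [ofCornerSumFn, Matrix.of_apply, cornerSumNat_succ_left, sum_range_succ,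
    zeroExtend_val]
  ring

theorem sum_range_zeroExtend_ofCornerSumFn_row {g : ℕ → ℕ → ℤ} (hg : ∀ i, g i 0 = 0)
    (p : Fin n) {j : ℕ} (hj : j ≤ n) :
    ∑ q ∈ range j, zeroExtend (ofCornerSumFn n g) p q = g (p + 1) j - g p j := by
  induction j with
  | zero => simp [hg]
  | succ j ih =>
    rw [sum_range_succ, ih (by omega), show j = (⟨j, hj⟩ : Fin n) from rfl, zeroExtend_val]
    simp only [ofCornerSumFn, Matrix.of_apply]
    ring

theorem sum_range_zeroExtend_ofCornerSumFn_col {g : ℕ → ℕ → ℤ} (hg : ∀ j, g 0 j = 0)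
    (q : Fin n) {i : ℕ} (hi : i ≤ n) :
    ∑ p ∈ range i, zeroExtend (ofCornerSumFn n g) p q = g i (q + 1) - g i q := by
  induction i with
  | zero => simp [hg]
  | succ i ih =>
    rw [sum_range_succ, ih (by omega), show i = (⟨i, hi⟩ : Fin n) from rfl, zeroExtend_val]
    simp only [ofCornerSumFn, Matrix.of_apply]
    ring

theorem cornerSumNat_ofCornerSumFn {g : ℕ → ℕ → ℤ} (hg : IsCornerSumFn n g) {i j : ℕ}
    (hi : i ≤ n) (hj : j ≤ n) : cornerSumNat (ofCornerSumFn n g) i j = g i j := by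
  induction i with
  | zero => simp [hg.zero_left]
  | succ i ih =>
    rw [cornerSumNat_succ_left, ih (by omega), show i = (⟨i, hi⟩ : Fin n) from rfl,
      sum_range_zeroExtend_ofCornerSumFn_row hg.zero_right _ hj]
    ring

theorem isASM_ofCornerSumFn {g : ℕ → ℕ → ℤ} (hg : IsCornerSumFn n g) :
    IsASM (ofCornerSumFn n g) := by
  refine ⟨fun p q => ?_, fun p j => ?_, fun i q => ?_, fun p => ?_, fun q => ?_⟩
  · have := hg.col_step (p + 1) q (by omega) q.isLt
    have := hg.col_step p q (by omega) q.isLt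
    simp only [ofCornerSumFn, Matrix.of_apply]
    omega
  · rw [← sum_range_zeroExtend_row,
      sum_range_zeroExtend_ofCornerSumFn_row hg.zero_right p (by omega)]
    have := hg.row_step p (j + 1) p.isLt (by omega)
    omega
  · rw [← sum_range_zeroExtend_col,
      sum_range_zeroExtend_ofCornerSumFn_col hg.zero_left q (by omega)]
    have := hg.col_step (i + 1) q (by omega) q.isLt
    omega
  · rw [← sum_range_zeroExtend_row_full,
      sum_range_zeroExtend_ofCornerSumFn_row hg.zero_right p le_rfl,
      hg.last_col _ (by omega), hg.last_col _ (by omega)]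
    push_cast; ring
  · rw [← sum_range_zeroExtend_col_full,
      sum_range_zeroExtend_ofCornerSumFn_col hg.zero_left q le_rfl,
      hg.last_row _ (by omega), hg.last_row _ (by omega)]
    push_cast; ring

theorem IsCornerSumFn.map₂ {g h : ℕ → ℕ → ℤ} (hg : IsCornerSumFn n g) (hh : IsCornerSumFn n h)
    (f : ℤ → ℤ → ℤ) (hf_mono : ∀ x y x' y', x ≤ x' → y ≤ y' → f x y ≤ f x' y')
    (hf_succ : ∀ x y, f (x + 1) (y + 1) = f x y + 1) (hf_self : ∀ x, f x x = x) :
    IsCornerSumFn n fun i j => f (g i j) (h i j) := by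
  have step : ∀ x y x' y', x ≤ x' ∧ x' ≤ x + 1 → y ≤ y' ∧ y' ≤ y + 1 →
      f x y ≤ f x' y' ∧ f x' y' ≤ f x y + 1 := fun x y x' y' hx hy =>
    ⟨hf_mono _ _ _ _ hx.1 hy.1, hf_succ x y ▸ hf_mono _ _ _ _ hx.2 hy.2⟩
  refine ⟨fun j => ?_, fun i => ?_, fun i j hi hj => ?_, fun i j hi hj => ?_,
    fun i hi => ?_, fun j hj => ?_⟩
  · simp [hg.zero_left, hh.zero_left, hf_self]
  · simp [hg.zero_right, hh.zero_right, hf_self]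
  · exact step _ _ _ _ (hg.row_step i j hi hj) (hh.row_step i j hi hj)
  · exact step _ _ _ _ (hg.col_step i j hi hj) (hh.col_step i j hi hj)
  · simp [hg.last_col i hi, hh.last_col i hi, hf_self]
  · simp [hg.last_row j hj, hh.last_row j hj, hf_self]

theorem eq_of_cornerSum_eq {A B : Matrix (Fin n) (Fin n) ℤ} (h : cornerSum A = cornerSum B) :
    A = B := by
  have hnat : ∀ i j, i ≤ n → j ≤ n → cornerSumNat A i j = cornerSumNat B i j
    | 0, _, _, _ | _ + 1, 0, _, _ => by simp
    | i + 1, j + 1, hi, hj => by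
      simpa only [cornerSum_eq_cornerSumNat] using congrFun₂ h ⟨i, hi⟩ ⟨j, hj⟩
  rw [← ofCornerSumFn_cornerSumNat A, ← ofCornerSumFn_cornerSumNat B]
  ext p q
  simp only [ofCornerSumFn, Matrix.of_apply]
  rw [hnat p q (by omega) (by omega), hnat (p + 1) q (by omega) (by omega),
    hnat p (q + 1) (by omega) (by omega), hnat (p + 1) (q + 1) (by omega) (by omega)]

theorem finite_setOf_isASM : {A : Matrix (Fin n) (Fin n) ℤ | IsASM A}.Finite :=
  (Set.Finite.pi' fun _ => Set.Finite.pi' fun _ => Set.toFinite {-1, 0, 1}).subset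
    fun A hA i j => by rcases hA.1 i j with h | h | h <;> simp [h]

theorem isCornerSumFn_min {A B : Matrix (Fin n) (Fin n) ℤ} (hA : IsASM A) (hB : IsASM B) :
    IsCornerSumFn n fun i j => min (cornerSumNat A i j) (cornerSumNat B i j) :=
  (isCornerSumFn_cornerSumNat hA).map₂ (isCornerSumFn_cornerSumNat hB) min
    (fun _ _ _ _ => min_le_min) (fun x y => min_add_add_right x y 1) min_self

theorem isCornerSumFn_max {A B : Matrix (Fin n) (Fin n) ℤ} (hA : IsASM A) (hB : IsASM B) :
    IsCornerSumFn n fun i j => max (cornerSumNat A i j) (cornerSumNat B i j) :=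
  (isCornerSumFn_cornerSumNat hA).map₂ (isCornerSumFn_cornerSumNat hB) max
    (fun _ _ _ _ => max_le_max) (fun x y => max_add_add_right x y 1) max_self

end CornerSumFn

@[ext]
structure ASM (n : ℕ) where
  val : Matrix (Fin n) (Fin n) ℤ
  isASM : IsASM val

namespace ASM

variable {n : ℕ}

instance : Finite (ASM n) :=
  have : Finite {A : Matrix (Fin n) (Fin n) ℤ | IsASM A} := finite_setOf_isASM.to_subtype
  Finite.of_injective
    (fun A : ASM n => (⟨A.val, A.isASM⟩ : {A : Matrix (Fin n) (Fin n) ℤ | IsASM A}))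
    fun _ _ h => ASM.ext (congrArg Subtype.val h)

instance : LE (ASM n) := ⟨fun A B => asmLE A.val B.val⟩

instance : LT (ASM n) := ⟨fun A B => asmLT A.val B.val⟩

instance : Max (ASM n) :=
  ⟨fun A B => ⟨_, isASM_ofCornerSumFn (isCornerSumFn_min A.isASM B.isASM)⟩⟩

instance : Min (ASM n) :=
  ⟨fun A B => ⟨_, isASM_ofCornerSumFn (isCornerSumFn_max A.isASM B.isASM)⟩⟩

theorem cornerSum_sup (A B : ASM n) (i j : Fin n) :
    cornerSum (A ⊔ B).val i j = min (cornerSum A.val i j) (cornerSum B.val i j) := by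
  simp only [cornerSum_eq_cornerSumNat]
  exact cornerSumNat_ofCornerSumFn (isCornerSumFn_min A.isASM B.isASM) i.isLt j.isLt

theorem cornerSum_inf (A B : ASM n) (i j : Fin n) :
    cornerSum (A ⊓ B).val i j = max (cornerSum A.val i j) (cornerSum B.val i j) := by
  simp only [cornerSum_eq_cornerSumNat]
  exact cornerSumNat_ofCornerSumFn (isCornerSumFn_max A.isASM B.isASM) i.isLt j.isLt

/-- Larger ASMs have smaller corner sums, so the corner-sum map is an embedding into the
order dual of `Fin n → Fin n → ℤ`, where joins are pointwise minima. -/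
instance : DistribLattice (ASM n) :=
  Function.Injective.distribLattice (fun A => OrderDual.toDual (cornerSum A.val))
    (fun _ _ h => ASM.ext (eq_of_cornerSum_eq h)) Iff.rfl Iff.rfl
    (fun A B => funext₂ (cornerSum_sup A B)) (fun A B => funext₂ (cornerSum_inf A B))

theorem covBy_iff_asmCovers {A B : ASM n} : A ⋖ B ↔ asmCovers A.val B.val :=
  ⟨fun h => ⟨h.1, fun C hC => h.2 (c := ⟨C, hC⟩)⟩, fun h => ⟨h.1, fun C => h.2 C.1 C.2⟩⟩

theorem joinIrred_iff_supIrred {A : ASM n} : JoinIrred A.val ↔ SupIrred A := by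
  rw [supIrred_iff_existsUnique_covBy]
  constructor
  · rintro ⟨-, C, ⟨hC, hCA⟩, huniq⟩
    exact ⟨⟨C, hC⟩, covBy_iff_asmCovers.2 hCA,
      fun D hD => ASM.ext (huniq D.val ⟨D.isASM, covBy_iff_asmCovers.1 hD⟩)⟩
  · rintro ⟨C, hCA, huniq⟩
    exact ⟨A.isASM, C.val, ⟨C.isASM, covBy_iff_asmCovers.1 hCA⟩,
      fun D ⟨hD, hDA⟩ => congrArg ASM.val (huniq ⟨D, hD⟩ (covBy_iff_asmCovers.2 hDA))⟩

theorem asmBeta_eq_ncard (B : ASM n) :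
    asmBeta B.val = {A : ASM n | SupIrred A ∧ A ≤ B}.ncard := by
  rw [asmBeta, ← Set.ncard_image_of_injective _ fun _ _ => ASM.ext]
  congr 1
  ext A
  constructor
  · rintro ⟨hA, hAB⟩
    exact ⟨⟨A, hA.1⟩, ⟨joinIrred_iff_supIrred.1 hA, hAB⟩, rfl⟩
  · rintro ⟨A, ⟨hA, hAB⟩, rfl⟩
    exact ⟨joinIrred_iff_supIrred.2 hA, hAB⟩

end ASM

theorem asmBeta_of_covers {n : ℕ} (A B : Matrix (Fin n) (Fin n) ℤ)
    (hA : IsASM A) (hB : IsASM B) (h : asmCovers A B) :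
    asmBeta B = asmBeta A + 1 := by
  rw [ASM.asmBeta_eq_ncard ⟨A, hA⟩, ASM.asmBeta_eq_ncard ⟨B, hB⟩]
  exact ncard_supIrred_le_of_covBy (ASM.covBy_iff_asmCovers.2 h)
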